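/- arXiv:1409.5891 — 5 statements merged into one kernel-verified Lean document; each statement's English description precedes it below -/
import Mathlib

section
/- Existence of perfect perturbations: let (x*, y*, s*) be an optimal solution of the original QP (so Ax*=b, Aᵀy*+s*−Hx*=c, X*S*e=0, x*,s* ≥ 0), A have full row rank, and μ̂ > 0. Then there exists a perturbation vector λ̂ > 0 (depending on x*, s*, μ̂) such that (x*, y*, s*) lies on the perturbed central path with λ = λ̂ at parameter μ̂, i.e., (X* + Λ̂)(S* + Λ̂)e = μ̂ e and x* + λ̂ > 0, s* + λ̂ > 0. -/
open Matrix

/-- Existence of perfect perturbations: if `(x*, y*, s*)` is an optimal solution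
of the original QP (i.e. satisfies its KKT conditions), `A` has full row rank,
and `μ̂ > 0`, then there exists a perturbation vector `λ̂ > 0` such that
`(x*, y*, s*)` lies on the perturbed central path with `λ = λ̂` at parameter `μ̂`:
`(x*ᵢ + λ̂ᵢ)(s*ᵢ + λ̂ᵢ) = μ̂` for all `i`, with `x* + λ̂ > 0` and `s* + λ̂ > 0`. -/
theorem exists_perfect_perturbations {m n : ℕ}
    (H : Matrix (Fin n) (Fin n) ℝ) (A : Matrix (Fin m) (Fin n) ℝ)
    (b : Fin m → ℝ) (c : Fin n → ℝ)
    (hH : H.PosSemidef) (hrank : A.rank = m)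
    (xs : Fin n → ℝ) (ys : Fin m → ℝ) (ss : Fin n → ℝ)
    (hkkt : A.mulVec xs = b ∧ Aᵀ.mulVec ys + ss - H.mulVec xs = c ∧
      (∀ i, xs i * ss i = 0) ∧ 0 ≤ xs ∧ 0 ≤ ss)
    (muhat : ℝ) (hmu : 0 < muhat) :
    ∃ lamhat : Fin n → ℝ, (∀ i, 0 < lamhat i) ∧
      (∀ i, (xs i + lamhat i) * (ss i + lamhat i) = muhat) ∧
      (∀ i, 0 < xs i + lamhat i) ∧ (∀ i, 0 < ss i + lamhat i) := by
  obtain ⟨-, -, hcomp, hx, hs⟩ := hkkt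
  refine ⟨fun i => (Real.sqrt ((xs i + ss i) ^ 2 + 4 * muhat) - (xs i + ss i)) / 2,
    ?_, ?_, ?_, ?_⟩ <;> intro i <;>
  · have hxi : (0:ℝ) ≤ xs i := hx i
    have hsi : (0:ℝ) ≤ ss i := hs i
    have ht : (0:ℝ) ≤ xs i + ss i := by linarith
    have hD : (xs i + ss i) ^ 2 < (xs i + ss i) ^ 2 + 4 * muhat := by linarith
    have hsq : xs i + ss i < Real.sqrt ((xs i + ss i) ^ 2 + 4 * muhat) := by
      nlinarith [Real.sq_sqrt (by positivity : (0:ℝ) ≤ (xs i + ss i) ^ 2 + 4 * muhat),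
        Real.sqrt_nonneg ((xs i + ss i) ^ 2 + 4 * muhat)]
    have hpos : 0 < (Real.sqrt ((xs i + ss i) ^ 2 + 4 * muhat) - (xs i + ss i)) / 2 := by
      linarith
    have hsq2 : Real.sqrt ((xs i + ss i) ^ 2 + 4 * muhat) ^ 2
        = (xs i + ss i) ^ 2 + 4 * muhat :=
      Real.sq_sqrt (by positivity)
    first
      | exact hpos
      | (have := hcomp i; nlinarith [hsq2])
      | linarith
end

section
/- For any point (x, y, s) in the symmetric neighbourhood N̄(γ, λ) of the perturbed central path, every component satisfies min(x_i + λ_i, s_i + λ_i) ≤ √(μ_λ/γ), and hence r(x,s) = ‖min(x,s)‖ ≤ √(n μ_λ/γ) + ‖λ‖. -/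
/-! Since `min a b ^ 2 ≤ a * b` for `a, b ≥ 0`, each `min (xᵢ + λᵢ) (sᵢ + λᵢ)` is at most
`√((xᵢ + λᵢ)(sᵢ + λᵢ)) ≤ √(μ_λ/γ)`. Translating by `λ` commutes with `min`, so
`min(x, s) = min(x + λ, s + λ) - λ`, and the triangle inequality gives the bound on `r(x, s)`. -/

open Matrix

/-- Euclidean norm of a finite real vector. -/
noncomputable def enorm {ι : Type*} [Fintype ι] (v : ι → ℝ) : ℝ :=
  Real.sqrt (∑ i, v i ^ 2)

/-- Perturbed duality measure `μ_λ = (x+λ)ᵀ(s+λ)/n`. -/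
noncomputable def muLam {n : ℕ} (lam x s : Fin n → ℝ) : ℝ :=
  (∑ i, (x i + lam i) * (s i + lam i)) / n

/-- Membership in the symmetric neighbourhood `N̄(γ, λ)` of the perturbed
central path. -/
def InSymNbhd {m n : ℕ} (H : Matrix (Fin n) (Fin n) ℝ)
    (A : Matrix (Fin m) (Fin n) ℝ) (b : Fin m → ℝ) (c : Fin n → ℝ)
    (γ : ℝ) (lam x s : Fin n → ℝ) (y : Fin m → ℝ) : Prop :=
  A.mulVec x = b ∧ Aᵀ.mulVec y + s - H.mulVec x = c ∧
  (∀ i, 0 < x i + lam i) ∧ (∀ i, 0 < s i + lam i) ∧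
  ∀ i, γ * muLam lam x s ≤ (x i + lam i) * (s i + lam i) ∧
    (x i + lam i) * (s i + lam i) ≤ muLam lam x s / γ

lemma min_sq_le_mul {a b : ℝ} (ha : 0 ≤ a) (hb : 0 ≤ b) : min a b ^ 2 ≤ a * b := by
  rw [sq]
  exact mul_le_mul (min_le_left a b) (min_le_right a b) (le_min ha hb) ha

lemma enorm_eq_norm_toLp {ι : Type*} [Fintype ι] (v : ι → ℝ) :
    _root_.enorm v = ‖WithLp.toLp 2 v‖ := by
  simp [_root_.enorm, EuclideanSpace.norm_eq, sq_abs]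

lemma enorm_sub_le_add {ι : Type*} [Fintype ι] (v w : ι → ℝ) :
    _root_.enorm (v - w) ≤ _root_.enorm v + _root_.enorm w := by
  simp only [enorm_eq_norm_toLp, WithLp.toLp_sub]
  exact norm_sub_le _ _

lemma enorm_le_sqrt_card_mul {ι : Type*} [Fintype ι] {v : ι → ℝ} {M : ℝ}
    (h : ∀ i, v i ^ 2 ≤ M) : _root_.enorm v ≤ Real.sqrt (Fintype.card ι * M) := by
  refine Real.sqrt_le_sqrt ?_
  calc ∑ i, v i ^ 2 ≤ ∑ _i : ι, M := Finset.sum_le_sum fun i _ => h i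
    _ = Fintype.card ι * M := by simp

lemma min_eq_min_add_sub {ι : Type*} (x s lam : ι → ℝ) :
    (fun i => min (x i) (s i)) = (fun i => min (x i + lam i) (s i + lam i)) - lam := by
  ext i
  simp [min_add_add_right]

lemma InSymNbhd.min_sq_le {m n : ℕ} {H : Matrix (Fin n) (Fin n) ℝ}
    {A : Matrix (Fin m) (Fin n) ℝ} {b : Fin m → ℝ} {c : Fin n → ℝ} {γ : ℝ}
    {lam x s : Fin n → ℝ} {y : Fin m → ℝ} (hmem : InSymNbhd H A b c γ lam x s y) (i : Fin n) :
    min (x i + lam i) (s i + lam i) ^ 2 ≤ muLam lam x s / γ := by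
  obtain ⟨-, -, hx, hs, hprod⟩ := hmem
  exact (min_sq_le_mul (hx i).le (hs i).le).trans (hprod i).2

theorem r_bound_in_symmetric_neighbourhood_general {m n : ℕ}
    (H : Matrix (Fin n) (Fin n) ℝ) (A : Matrix (Fin m) (Fin n) ℝ)
    (b : Fin m → ℝ) (c : Fin n → ℝ)
    (γ : ℝ)
    (lam : Fin n → ℝ)
    (x : Fin n → ℝ) (y : Fin m → ℝ) (s : Fin n → ℝ)
    (hmem : InSymNbhd H A b c γ lam x s y) :
    (∀ i, min (x i + lam i) (s i + lam i) ≤ Real.sqrt (muLam lam x s / γ)) ∧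
    _root_.enorm (fun i => min (x i) (s i))
      ≤ Real.sqrt (n * muLam lam x s / γ) + _root_.enorm lam := by
  refine ⟨fun i => Real.le_sqrt_of_sq_le (hmem.min_sq_le i), ?_⟩
  rw [min_eq_min_add_sub x s lam, mul_div_assoc]
  grw [enorm_sub_le_add, enorm_le_sqrt_card_mul hmem.min_sq_le, Fintype.card_fin]

/-- For any point `(x, y, s)` in the symmetric neighbourhood `N̄(γ, λ)`, every
component satisfies `min(xᵢ + λᵢ, sᵢ + λᵢ) ≤ √(μ_λ/γ)`, and hence
`r(x,s) = ‖min(x,s)‖ ≤ √(n μ_λ/γ) + ‖λ‖`. -/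
theorem r_bound_in_symmetric_neighbourhood {m n : ℕ}
    (H : Matrix (Fin n) (Fin n) ℝ) (A : Matrix (Fin m) (Fin n) ℝ)
    (b : Fin m → ℝ) (c : Fin n → ℝ)
    (γ : ℝ) (hγ : γ ∈ Set.Ioo (0 : ℝ) 1)
    (lam : Fin n → ℝ) (hlam : 0 ≤ lam)
    (x : Fin n → ℝ) (y : Fin m → ℝ) (s : Fin n → ℝ)
    (hmem : InSymNbhd H A b c γ lam x s y) :
    (∀ i, min (x i + lam i) (s i + lam i) ≤ Real.sqrt (muLam lam x s / γ)) ∧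
    _root_.enorm (fun i => min (x i) (s i))
      ≤ Real.sqrt (n * muLam lam x s / γ) + _root_.enorm lam :=
  r_bound_in_symmetric_neighbourhood_general H A b c γ lam x y s hmem
end

section
/- For any point (x, y, s) in the symmetric neighbourhood N̄(γ, λ), the residual w(x,s) = ‖(−x, −s, xᵀs)₊‖ satisfies w(x,s) ≤ n μ_λ + 2‖λ‖ + ‖λ‖². -/
/-!
Write `L = ‖λ‖`. Since `x + λ > 0` and `λ ≥ 0`, the negative parts of `x` and `s` are bounded
componentwise by `λ`, so each has norm at most `L`. Expanding `(x + λ)ᵀ(s + λ)` gives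
`xᵀs = n μ_λ − λᵀ(x + λ) − λᵀ(s + λ) + L² ≤ n μ_λ + L²`. The triangle inequality for the
three blocks of `(−x, −s, xᵀs)₊` then gives `w ≤ L + L + n μ_λ + L²`.
-/

open Matrix

/-- Euclidean norm of a finite real vector. -/
noncomputable def enormEuc {ι : Type*} [Fintype ι] (v : ι → ℝ) : ℝ :=
  Real.sqrt (∑ i, v i ^ 2)

/-- `w(x,s) = ‖(−x, −s, xᵀs)₊‖` (componentwise positive part). -/
noncomputable def wRes {n : ℕ} (x s : Fin n → ℝ) : ℝ :=
  Real.sqrt ((∑ i, max (-x i) 0 ^ 2) + (∑ i, max (-s i) 0 ^ 2) + max (x ⬝ᵥ s) 0 ^ 2)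

theorem enormEuc_sq {ι : Type*} [Fintype ι] (v : ι → ℝ) : enormEuc v ^ 2 = ∑ i, v i ^ 2 :=
  Real.sq_sqrt (Finset.sum_nonneg fun i _ => sq_nonneg (v i))

theorem enormEuc_nonneg {ι : Type*} [Fintype ι] (v : ι → ℝ) : 0 ≤ enormEuc v :=
  Real.sqrt_nonneg _

theorem enormEuc_le_enormEuc {ι : Type*} [Fintype ι] {u v : ι → ℝ} (hu : 0 ≤ u) (huv : u ≤ v) :
    enormEuc u ≤ enormEuc v :=
  Real.sqrt_le_sqrt <| Finset.sum_le_sum fun i _ => pow_le_pow_left₀ (hu i) (huv i) 2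

theorem enormEuc_negPart_le {ι : Type*} [Fintype ι] {x lam : ι → ℝ} (hlam : 0 ≤ lam)
    (hx : ∀ i, 0 ≤ x i + lam i) : enormEuc (fun i => max (-x i) 0) ≤ enormEuc lam :=
  enormEuc_le_enormEuc (fun i => le_max_right _ _)
    fun i => max_le (by linarith [hx i]) (hlam i)

theorem sqrt_add_add_sq_le {a b c : ℝ} (ha : 0 ≤ a) (hb : 0 ≤ b) (hc : 0 ≤ c) :
    Real.sqrt (a ^ 2 + b ^ 2 + c ^ 2) ≤ a + b + c :=
  (Real.sqrt_le_left (by positivity)).mpr <| by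
    nlinarith [mul_nonneg ha hb, mul_nonneg ha hc, mul_nonneg hb hc]

theorem wRes_le {n : ℕ} (x s : Fin n → ℝ) :
    wRes x s ≤ enormEuc (fun i => max (-x i) 0) + enormEuc (fun i => max (-s i) 0) +
      max (x ⬝ᵥ s) 0 := by
  rw [wRes, ← enormEuc_sq (fun i => max (-x i) 0), ← enormEuc_sq (fun i => max (-s i) 0)]
  exact sqrt_add_add_sq_le (enormEuc_nonneg _) (enormEuc_nonneg _) (le_max_right _ _)

theorem natCast_mul_muLam {n : ℕ} (lam x s : Fin n → ℝ) :
    n * muLam lam x s = ∑ i, (x i + lam i) * (s i + lam i) := by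
  rcases Nat.eq_zero_or_pos n with rfl | hn
  · simp
  · rw [muLam, mul_div_cancel₀ _ (Nat.cast_ne_zero.mpr hn.ne')]

theorem dotProduct_le_sum_shifted_mul_add_sum_sq {ι : Type*} [Fintype ι] {x s lam : ι → ℝ}
    (hlam : 0 ≤ lam) (hx : ∀ i, 0 ≤ x i + lam i) (hs : ∀ i, 0 ≤ s i + lam i) :
    x ⬝ᵥ s ≤ ∑ i, (x i + lam i) * (s i + lam i) + ∑ i, lam i ^ 2 := by
  rw [dotProduct, ← Finset.sum_add_distrib]
  exact Finset.sum_le_sum fun i _ => by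
    nlinarith [mul_nonneg (hlam i) (hx i), mul_nonneg (hlam i) (hs i)]

theorem w_bound_in_symmetric_neighbourhood_general {m n : ℕ}
    (H : Matrix (Fin n) (Fin n) ℝ) (A : Matrix (Fin m) (Fin n) ℝ)
    (b : Fin m → ℝ) (c : Fin n → ℝ)
    (γ : ℝ)
    (lam : Fin n → ℝ) (hlam : 0 ≤ lam)
    (x : Fin n → ℝ) (y : Fin m → ℝ) (s : Fin n → ℝ)
    (hmem : InSymNbhd H A b c γ lam x s y) :
    wRes x s ≤ n * muLam lam x s + 2 * enormEuc lam + enormEuc lam ^ 2 := by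
  obtain ⟨-, -, hx, hs, -⟩ := hmem
  have hx₀ : ∀ i, 0 ≤ x i + lam i := fun i => (hx i).le
  have hs₀ : ∀ i, 0 ≤ s i + lam i := fun i => (hs i).le
  have hμ : 0 ≤ n * muLam lam x s := by
    rw [natCast_mul_muLam]
    exact Finset.sum_nonneg fun i _ => mul_nonneg (hx₀ i) (hs₀ i)
  have hdot : max (x ⬝ᵥ s) 0 ≤ n * muLam lam x s + enormEuc lam ^ 2 := by
    refine max_le ?_ (add_nonneg hμ (sq_nonneg _))
    rw [natCast_mul_muLam, enormEuc_sq]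
    exact dotProduct_le_sum_shifted_mul_add_sum_sq hlam hx₀ hs₀
  calc wRes x s ≤ enormEuc lam + enormEuc lam + (n * muLam lam x s + enormEuc lam ^ 2) :=
        (wRes_le x s).trans <| add_le_add (add_le_add (enormEuc_negPart_le hlam hx₀)
          (enormEuc_negPart_le hlam hs₀)) hdot
    _ = n * muLam lam x s + 2 * enormEuc lam + enormEuc lam ^ 2 := by ring

/-- For any point `(x, y, s)` in the symmetric neighbourhood `N̄(γ, λ)`, the
residual `w(x,s) = ‖(−x, −s, xᵀs)₊‖` satisfies
`w(x,s) ≤ n μ_λ + 2‖λ‖ + ‖λ‖²`. -/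
theorem w_bound_in_symmetric_neighbourhood {m n : ℕ}
    (H : Matrix (Fin n) (Fin n) ℝ) (A : Matrix (Fin m) (Fin n) ℝ)
    (b : Fin m → ℝ) (c : Fin n → ℝ)
    (γ : ℝ) (hγ : γ ∈ Set.Ioo (0 : ℝ) 1)
    (lam : Fin n → ℝ) (hlam : 0 ≤ lam)
    (x : Fin n → ℝ) (y : Fin m → ℝ) (s : Fin n → ℝ)
    (hmem : InSymNbhd H A b c γ lam x s y) :
    wRes x s ≤ n * muLam lam x s + 2 * enormEuc lam + enormEuc lam ^ 2 :=
  w_bound_in_symmetric_neighbourhood_general H A b c γ lam hlam x y s hmem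
end

section
/- Proximity in the symmetric neighbourhood: let (x, y, s) ∈ N̄(γ, λ) for some λ ≥ 0. Then there exist an optimal solution (x*, y*, s*) of the original QP and problem-dependent constants τ_p, τ_d such that ‖x − x*‖ < τ_p (C₂ √μ_λ max(√μ_λ, 1) + 4‖λ‖ max(‖λ‖, 1)) and ‖s − s*‖ < τ_d (C₂ √μ_λ max(√μ_λ, 1) + 4‖λ‖ max(‖λ‖, 1)), where C₂ = √(n/γ) + n. -/
open Matrix

/-- Euclidean norm of a finite real vector. -/
noncomputable def eucNorm {ι : Type*} [Fintype ι] (v : ι → ℝ) : ℝ :=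
  Real.sqrt (∑ i, v i ^ 2)

/-- `r(x,s) = ‖min(x,s)‖` (componentwise minimum). -/
noncomputable def rRes {n : ℕ} (x s : Fin n → ℝ) : ℝ :=
  eucNorm (fun i => min (x i) (s i))

/-- The KKT conditions of the original QP. -/
def KKT {m n : ℕ} (H : Matrix (Fin n) (Fin n) ℝ) (A : Matrix (Fin m) (Fin n) ℝ)
    (b : Fin m → ℝ) (c : Fin n → ℝ)
    (xs : Fin n → ℝ) (ys : Fin m → ℝ) (ss : Fin n → ℝ) : Prop :=
  A.mulVec xs = b ∧ Aᵀ.mulVec ys + ss - H.mulVec xs = c ∧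
  (∀ i, xs i * ss i = 0) ∧ 0 ≤ xs ∧ 0 ≤ ss

/-! Write `u = x + λ > 0`, `v = s + λ > 0` with `λ ≥ 0`, so that `uᵀv = n μ_λ`. Componentwise,
`min(xᵢ, sᵢ)² ≤ uᵢvᵢ + λᵢ²`, `(−xᵢ)₊, (−sᵢ)₊ ≤ λᵢ` and `xᵢsᵢ ≤ uᵢvᵢ + λᵢ²`, whence
`r(x,s) ≤ √(n μ_λ) + ‖λ‖` and `w(x,s) ≤ 2‖λ‖ + n μ_λ + ‖λ‖²`. Since `γ < 1` gives `√n < √(n/γ)`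
and `μ_λ > 0`, the sum `r + w` is strictly below the bracket of the claim, and the QP error bound
at `(x, y, s)` does the rest. -/

lemma Real.sqrt_add_le_sqrt_add_sqrt {a b : ℝ} (ha : 0 ≤ a) (hb : 0 ≤ b) :
    √(a + b) ≤ √a + √b := by
  rw [Real.sqrt_le_left (by positivity)]
  nlinarith [Real.sq_sqrt ha, Real.sq_sqrt hb, mul_nonneg (Real.sqrt_nonneg a) (Real.sqrt_nonneg b)]

lemma eucNorm_sq {ι : Type*} [Fintype ι] (v : ι → ℝ) : eucNorm v ^ 2 = ∑ i, v i ^ 2 :=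
  Real.sq_sqrt (Finset.sum_nonneg fun i _ => sq_nonneg (v i))

lemma sqrt_mul_add_mul_sq_lt {n γ a : ℝ} (hn : 0 < n) (hγ0 : 0 < γ) (hγ1 : γ < 1) (ha : 0 < a) :
    √n * a + n * a ^ 2 < (√(n / γ) + n) * a * max a 1 := by
  have hsqrt : √n < √(n / γ) :=
    Real.sqrt_lt_sqrt hn.le ((lt_div_iff₀ hγ0).mpr (by nlinarith))
  nlinarith [mul_pos ha (sub_pos.mpr hsqrt), le_max_left a 1, le_max_right a 1,
    mul_nonneg (mul_nonneg ha.le (Real.sqrt_nonneg (n / γ))) (sub_nonneg.mpr (le_max_right a 1)),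
    mul_nonneg (mul_nonneg hn.le ha.le) (sub_nonneg.mpr (le_max_left a 1))]

lemma three_mul_add_sq_le {b : ℝ} (hb : 0 ≤ b) : 3 * b + b ^ 2 ≤ 4 * b * max b 1 := by
  nlinarith [mul_le_mul_of_nonneg_left (le_max_left b 1) hb,
    mul_le_mul_of_nonneg_left (le_max_right b 1) hb]

section ShiftedProduct

variable {x s l : ℝ}

lemma mul_le_shifted_mul_add_sq (hl : 0 ≤ l) (hx : 0 ≤ x + l) (hs : 0 ≤ s + l) :
    x * s ≤ (x + l) * (s + l) + l ^ 2 := by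
  nlinarith [mul_nonneg hl hx, mul_nonneg hl hs]

lemma min_sq_le_shifted_mul_add_sq (hl : 0 ≤ l) (hx : 0 ≤ x + l) (hs : 0 ≤ s + l) :
    min x s ^ 2 ≤ (x + l) * (s + l) + l ^ 2 := by
  rcases le_total x s with h | h
  · rw [min_eq_left h]
    nlinarith [mul_nonneg hl hx, mul_le_mul_of_nonneg_left (add_le_add_right h l) hx]
  · rw [min_eq_right h]
    nlinarith [mul_nonneg hl hs, mul_le_mul_of_nonneg_left (add_le_add_right h l) hs]

lemma neg_part_le_of_shift_nonneg (hl : 0 ≤ l) (hx : 0 ≤ x + l) : max (-x) 0 ≤ l :=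
  max_le (by linarith) hl

end ShiftedProduct

section Residuals

variable {n : ℕ} {lam x s : Fin n → ℝ}

lemma rRes_le (hlam : 0 ≤ lam) (hx : ∀ i, 0 ≤ x i + lam i) (hs : ∀ i, 0 ≤ s i + lam i) :
    rRes x s ≤ √((x + lam) ⬝ᵥ (s + lam)) + eucNorm lam := by
  have hsum : ∑ i, min (x i) (s i) ^ 2 ≤ (x + lam) ⬝ᵥ (s + lam) + ∑ i, lam i ^ 2 := by
    simp only [dotProduct, Pi.add_apply, ← Finset.sum_add_distrib]
    exact Finset.sum_le_sum fun i _ => min_sq_le_shifted_mul_add_sq (hlam i) (hx i) (hs i)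
  have hdot : 0 ≤ (x + lam) ⬝ᵥ (s + lam) :=
    Finset.sum_nonneg fun i _ => mul_nonneg (hx i) (hs i)
  calc rRes x s ≤ √((x + lam) ⬝ᵥ (s + lam) + ∑ i, lam i ^ 2) := Real.sqrt_le_sqrt hsum
    _ ≤ √((x + lam) ⬝ᵥ (s + lam)) + eucNorm lam :=
      Real.sqrt_add_le_sqrt_add_sqrt hdot (Finset.sum_nonneg fun i _ => sq_nonneg (lam i))

lemma wRes_le_s15 (hlam : 0 ≤ lam) (hx : ∀ i, 0 ≤ x i + lam i) (hs : ∀ i, 0 ≤ s i + lam i) :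
    wRes x s ≤ 2 * eucNorm lam + ((x + lam) ⬝ᵥ (s + lam) + eucNorm lam ^ 2) := by
  set L := ∑ i, lam i ^ 2
  set C := (x + lam) ⬝ᵥ (s + lam) + eucNorm lam ^ 2
  have hL : 0 ≤ L := Finset.sum_nonneg fun i _ => sq_nonneg (lam i)
  have hC : 0 ≤ C := add_nonneg (Finset.sum_nonneg fun i _ => mul_nonneg (hx i) (hs i)) (sq_nonneg _)
  have hneg {z : Fin n → ℝ} (hz : ∀ i, 0 ≤ z i + lam i) : ∑ i, max (-z i) 0 ^ 2 ≤ L :=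
    Finset.sum_le_sum fun i _ =>
      pow_le_pow_left₀ (le_max_right _ _) (neg_part_le_of_shift_nonneg (hlam i) (hz i)) 2
  have hxs : x ⬝ᵥ s ≤ C := by
    simp only [C, eucNorm_sq, dotProduct, Pi.add_apply, ← Finset.sum_add_distrib]
    exact Finset.sum_le_sum fun i _ => mul_le_shifted_mul_add_sq (hlam i) (hx i) (hs i)
  have hcompl : max (x ⬝ᵥ s) 0 ^ 2 ≤ C ^ 2 :=
    pow_le_pow_left₀ (le_max_right _ _) (max_le hxs hC) 2
  calc wRes x s ≤ √(L + L + C ^ 2) :=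
      Real.sqrt_le_sqrt (add_le_add (add_le_add (hneg hx) (hneg hs)) hcompl)
    _ ≤ √L + √L + C := by
      grw [Real.sqrt_add_le_sqrt_add_sqrt (by positivity) (sq_nonneg C),
        Real.sqrt_add_le_sqrt_add_sqrt hL hL, Real.sqrt_sq hC]
    _ = 2 * eucNorm lam + C := by rw [eucNorm]; ring

lemma dotProduct_shift_eq_card_mul_muLam (hn : n ≠ 0) :
    (x + lam) ⬝ᵥ (s + lam) = n * muLam lam x s := by
  rw [muLam, mul_div_cancel₀ _ (Nat.cast_ne_zero.mpr hn)]
  rfl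

lemma muLam_pos (hn : 0 < n) (hx : ∀ i, 0 < x i + lam i) (hs : ∀ i, 0 < s i + lam i) :
    0 < muLam lam x s :=
  div_pos (Finset.sum_pos (fun i _ => mul_pos (hx i) (hs i)) ⟨⟨0, hn⟩, Finset.mem_univ _⟩)
    (Nat.cast_pos.mpr hn)

lemma rRes_add_wRes_lt {γ : ℝ} (hn : 0 < n) (hγ0 : 0 < γ) (hγ1 : γ < 1) (hlam : 0 ≤ lam)
    (hx : ∀ i, 0 < x i + lam i) (hs : ∀ i, 0 < s i + lam i) :
    rRes x s + wRes x s < (√(n / γ) + n) * √(muLam lam x s) * max √(muLam lam x s) 1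
      + 4 * eucNorm lam * max (eucNorm lam) 1 := by
  have hμ := muLam_pos hn hx hs
  have hr := rRes_le hlam (fun i => (hx i).le) (fun i => (hs i).le)
  have hw := wRes_le_s15 hlam (fun i => (hx i).le) (fun i => (hs i).le)
  rw [dotProduct_shift_eq_card_mul_muLam hn.ne', ← Real.sq_sqrt hμ.le,
    Real.sqrt_mul (Nat.cast_nonneg n), Real.sqrt_sq (Real.sqrt_nonneg _)] at hr
  rw [dotProduct_shift_eq_card_mul_muLam hn.ne', ← Real.sq_sqrt hμ.le] at hw
  linarith [sqrt_mul_add_mul_sq_lt (Nat.cast_pos.mpr hn) hγ0 hγ1 (Real.sqrt_pos.mpr hμ),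
    three_mul_add_sq_le (b := eucNorm lam) (Real.sqrt_nonneg _)]

end Residuals

theorem proximity_in_symmetric_neighbourhood_general {m n : ℕ} (hn : 0 < n)
    (H : Matrix (Fin n) (Fin n) ℝ) (A : Matrix (Fin m) (Fin n) ℝ)
    (b : Fin m → ℝ) (c : Fin n → ℝ)
    (γ : ℝ) (hγ : γ ∈ Set.Ioo (0 : ℝ) 1)
    (lam : Fin n → ℝ) (hlam : 0 ≤ lam)
    (x : Fin n → ℝ) (y : Fin m → ℝ) (s : Fin n → ℝ)
    (hmem : InSymNbhd H A b c γ lam x s y)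
    (τp τd : ℝ) (hτp : 0 < τp) (hτd : 0 < τd)
    (herr : ∀ (x' : Fin n → ℝ) (y' : Fin m → ℝ) (s' : Fin n → ℝ),
      A.mulVec x' = b → Aᵀ.mulVec y' + s' - H.mulVec x' = c →
      ∃ (xs : Fin n → ℝ) (ys : Fin m → ℝ) (ss : Fin n → ℝ),
        KKT H A b c xs ys ss ∧
        eucNorm (x' - xs) ≤ τp * (rRes x' s' + wRes x' s') ∧
        eucNorm (s' - ss) ≤ τd * (rRes x' s' + wRes x' s')) :
    ∃ (xs : Fin n → ℝ) (ys : Fin m → ℝ) (ss : Fin n → ℝ),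
      KKT H A b c xs ys ss ∧
      eucNorm (x - xs) < τp * ((Real.sqrt (n / γ) + n) * Real.sqrt (muLam lam x s)
          * max (Real.sqrt (muLam lam x s)) 1
        + 4 * eucNorm lam * max (eucNorm lam) 1) ∧
      eucNorm (s - ss) < τd * ((Real.sqrt (n / γ) + n) * Real.sqrt (muLam lam x s)
          * max (Real.sqrt (muLam lam x s)) 1
        + 4 * eucNorm lam * max (eucNorm lam) 1) := by
  obtain ⟨hAx, hdual, hx, hs, -⟩ := hmem
  obtain ⟨xs, ys, ss, hkkt, hxs, hss⟩ := herr x y s hAx hdual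
  have hres := rRes_add_wRes_lt hn hγ.1 hγ.2 hlam hx hs
  exact ⟨xs, ys, ss, hkkt, hxs.trans_lt (mul_lt_mul_of_pos_left hres hτp),
    hss.trans_lt (mul_lt_mul_of_pos_left hres hτd)⟩

/-- Proximity in the symmetric neighbourhood: if `(x, y, s) ∈ N̄(γ, λ)` with
`λ ≥ 0`, and `τ_p, τ_d > 0` are the QP error-bound constants, then there exists
an optimal solution `(x*, y*, s*)` of the original QP such that
`‖x − x*‖ < τ_p (C₂ √μ_λ max(√μ_λ, 1) + 4‖λ‖ max(‖λ‖, 1))` and similarly for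
`‖s − s*‖`, where `C₂ = √(n/γ) + n`. -/
theorem proximity_in_symmetric_neighbourhood {m n : ℕ} (hn : 0 < n)
    (H : Matrix (Fin n) (Fin n) ℝ) (A : Matrix (Fin m) (Fin n) ℝ)
    (b : Fin m → ℝ) (c : Fin n → ℝ) (hH : H.PosSemidef)
    (γ : ℝ) (hγ : γ ∈ Set.Ioo (0 : ℝ) 1)
    (lam : Fin n → ℝ) (hlam : 0 ≤ lam)
    (x : Fin n → ℝ) (y : Fin m → ℝ) (s : Fin n → ℝ)
    (hmem : InSymNbhd H A b c γ lam x s y)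
    (τp τd : ℝ) (hτp : 0 < τp) (hτd : 0 < τd)
    (herr : ∀ (x' : Fin n → ℝ) (y' : Fin m → ℝ) (s' : Fin n → ℝ),
      A.mulVec x' = b → Aᵀ.mulVec y' + s' - H.mulVec x' = c →
      ∃ (xs : Fin n → ℝ) (ys : Fin m → ℝ) (ss : Fin n → ℝ),
        KKT H A b c xs ys ss ∧
        eucNorm (x' - xs) ≤ τp * (rRes x' s' + wRes x' s') ∧
        eucNorm (s' - ss) ≤ τd * (rRes x' s' + wRes x' s')) :
    ∃ (xs : Fin n → ℝ) (ys : Fin m → ℝ) (ss : Fin n → ℝ),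
      KKT H A b c xs ys ss ∧
      eucNorm (x - xs) < τp * ((Real.sqrt (n / γ) + n) * Real.sqrt (muLam lam x s)
          * max (Real.sqrt (muLam lam x s)) 1
        + 4 * eucNorm lam * max (eucNorm lam) 1) ∧
      eucNorm (s - ss) < τd * ((Real.sqrt (n / γ) + n) * Real.sqrt (muLam lam x s)
          * max (Real.sqrt (muLam lam x s)) 1
        + 4 * eucNorm lam * max (eucNorm lam) 1) :=
  proximity_in_symmetric_neighbourhood_general hn H A b c γ hγ lam hlam x y s hmem τp τd hτp hτd
    herr
end

section
/- Sandwiching the active set: let C > 0, fix λ with 0 < ‖λ‖ < min(1, C/(8 max(τ_p, τ_d))), and let (x,y,s) ∈ N̄(γ,λ) with μ_λ < min(1, (C/(2 max(τ_p,τ_d) C₂))²). Then there exists an optimal solution (x*,y*,s*) of the original QP such that {i : s_i ≥ C} ⊆ {i : s*_i > 0} ⊆ {i : x*_i = 0} ⊆ {i : x_i < C}. -/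
open Matrix

/-- `C₂ = √(n/γ) + n`. -/
noncomputable def C2 (n : ℕ) (γ : ℝ) : ℝ := Real.sqrt (n / γ) + n

/-- The proximity bound `C₂ √μ_λ max(√μ_λ, 1) + 4‖λ‖ max(‖λ‖, 1)`. -/
noncomputable def proxBound {n : ℕ} (γ : ℝ) (lam x s : Fin n → ℝ) : ℝ :=
  C2 n γ * Real.sqrt (muLam lam x s) * max (Real.sqrt (muLam lam x s)) 1
    + 4 * eucNorm lam * max (eucNorm lam) 1

/-!
Under the smallness assumptions on `‖λ‖` and `μ_λ`, both `max(·, 1)` factors of the proximity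
bound equal `1`, and each of its two remaining terms is below `C / (2 max(τ_p, τ_d))`. Hence
`x` and `s` lie within `C` of `x*` and `s*` coordinatewise, which gives the outer two inclusions;
the middle one is complementarity `x*ᵢ s*ᵢ = 0`.
-/

lemma eucNorm_nonneg {ι : Type*} [Fintype ι] (v : ι → ℝ) : 0 ≤ eucNorm v :=
  Real.sqrt_nonneg _

lemma abs_apply_le_eucNorm {ι : Type*} [Fintype ι] (v : ι → ℝ) (i : ι) :
    |v i| ≤ eucNorm v := by
  rw [← Real.sqrt_sq_eq_abs]
  exact Real.sqrt_le_sqrt (Finset.single_le_sum (fun j _ => sq_nonneg (v j)) (Finset.mem_univ i))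

lemma abs_sub_apply_lt_of_eucNorm_sub_lt {ι : Type*} [Fintype ι] {v w : ι → ℝ} {r : ℝ}
    (h : eucNorm (v - w) < r) (i : ι) : |v i - w i| < r :=
  (abs_apply_le_eucNorm (v - w) i).trans_lt h

lemma KKT.eq_zero_of_pos {m n : ℕ} {H : Matrix (Fin n) (Fin n) ℝ}
    {A : Matrix (Fin m) (Fin n) ℝ} {b : Fin m → ℝ} {c : Fin n → ℝ}
    {xs : Fin n → ℝ} {ys : Fin m → ℝ} {ss : Fin n → ℝ} (hK : KKT H A b c xs ys ss)
    {i : Fin n} (hi : 0 < ss i) : xs i = 0 :=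
  (mul_eq_zero.1 (hK.2.2.1 i)).resolve_right hi.ne'

lemma C2_pos {n : ℕ} (hn : 0 < n) (γ : ℝ) : 0 < C2 n γ := by
  unfold C2
  positivity

lemma proxBound_nonneg {n : ℕ} (γ : ℝ) (lam x s : Fin n → ℝ) :
    0 ≤ proxBound γ lam x s := by
  unfold proxBound C2 eucNorm
  positivity

lemma proxBound_lt_div {n : ℕ} (hn : 0 < n) {γ T C : ℝ} (hT : 0 < T) (hC : 0 < C)
    {lam x s : Fin n → ℝ} (hlam : eucNorm lam < min 1 (C / (8 * T)))
    (hmu : muLam lam x s < min 1 ((C / (2 * T * C2 n γ)) ^ 2)) :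
    proxBound γ lam x s < C / T := by
  have hC2 := C2_pos hn γ
  obtain ⟨hlam1, hlamC⟩ := lt_min_iff.1 hlam
  obtain ⟨hmu1, hmuC⟩ := lt_min_iff.1 hmu
  have hsqrt1 : Real.sqrt (muLam lam x s) < 1 := (Real.sqrt_lt' one_pos).2 (by simpa using hmu1)
  have hsqrtC : Real.sqrt (muLam lam x s) < C / (2 * T * C2 n γ) :=
    (Real.sqrt_lt' (by positivity)).2 hmuC
  have hcentral : C2 n γ * Real.sqrt (muLam lam x s) < C / (2 * T) :=
    calc C2 n γ * Real.sqrt (muLam lam x s)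
        < C2 n γ * (C / (2 * T * C2 n γ)) := mul_lt_mul_of_pos_left hsqrtC hC2
      _ = C / (2 * T) := by field_simp
  have hpert : 4 * eucNorm lam < C / (2 * T) :=
    calc 4 * eucNorm lam < 4 * (C / (8 * T)) := by linarith
      _ = C / (2 * T) := by field_simp; ring
  have hhalves : C / (2 * T) + C / (2 * T) = C / T := by field_simp; ring
  unfold proxBound
  rw [max_eq_right hsqrt1.le, max_eq_right hlam1.le, mul_one, mul_one]
  linarith

lemma mul_proxBound_lt {n : ℕ} (hn : 0 < n) {γ τ T C : ℝ} (hτ : τ ≤ T) (hT : 0 < T)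
    (hC : 0 < C) {lam x s : Fin n → ℝ} (hlam : eucNorm lam < min 1 (C / (8 * T)))
    (hmu : muLam lam x s < min 1 ((C / (2 * T * C2 n γ)) ^ 2)) :
    τ * proxBound γ lam x s < C :=
  calc τ * proxBound γ lam x s ≤ T * proxBound γ lam x s :=
        mul_le_mul_of_nonneg_right hτ (proxBound_nonneg γ lam x s)
    _ < T * (C / T) := mul_lt_mul_of_pos_left (proxBound_lt_div hn hT hC hlam hmu) hT
    _ = C := by field_simp

theorem active_set_sandwich_general {m n : ℕ}
    (H : Matrix (Fin n) (Fin n) ℝ) (A : Matrix (Fin m) (Fin n) ℝ)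
    (b : Fin m → ℝ) (c : Fin n → ℝ)
    (γ : ℝ)
    (τp τd : ℝ) (hτp : 0 < τp)
    (C : ℝ) (hC : 0 < C)
    (lam : Fin n → ℝ)
    (hlamub : eucNorm lam < min 1 (C / (8 * max τp τd)))
    (x : Fin n → ℝ) (s : Fin n → ℝ)
    (hmu : muLam lam x s < min 1 ((C / (2 * max τp τd * C2 n γ)) ^ 2))
    (hprox : ∃ (xs : Fin n → ℝ) (ys : Fin m → ℝ) (ss : Fin n → ℝ),
      KKT H A b c xs ys ss ∧
      eucNorm (x - xs) < τp * proxBound γ lam x s ∧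
      eucNorm (s - ss) < τd * proxBound γ lam x s) :
    ∃ (xs : Fin n → ℝ) (ys : Fin m → ℝ) (ss : Fin n → ℝ),
      KKT H A b c xs ys ss ∧
      {i : Fin n | C ≤ s i} ⊆ {i : Fin n | 0 < ss i} ∧
      {i : Fin n | 0 < ss i} ⊆ {i : Fin n | xs i = 0} ∧
      {i : Fin n | xs i = 0} ⊆ {i : Fin n | x i < C} := by
  obtain ⟨xs, ys, ss, hK, hx, hs⟩ := hprox
  have hT : 0 < max τp τd := lt_max_of_lt_left hτp
  refine ⟨xs, ys, ss, hK, fun i hi => ?_, fun i hi => hK.eq_zero_of_pos hi, fun i hi => ?_⟩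
  · have hsi := abs_sub_apply_lt_of_eucNorm_sub_lt
      (hs.trans (mul_proxBound_lt i.pos (le_max_right τp τd) hT hC hlamub hmu)) i
    have hsi' : C ≤ s i := hi
    show 0 < ss i
    linarith [(abs_lt.1 hsi).2]
  · have hxi := abs_sub_apply_lt_of_eucNorm_sub_lt
      (hx.trans (mul_proxBound_lt i.pos (le_max_left τp τd) hT hC hlamub hmu)) i
    have hxi' : xs i = 0 := hi
    show x i < C
    linarith [(abs_lt.1 hxi).2]

/-- Sandwiching the active set: let `C > 0`, fix `λ` with
`0 < ‖λ‖ < min(1, C/(8 max(τ_p, τ_d)))`, and let `(x,y,s) ∈ N̄(γ,λ)` with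
`μ_λ < min(1, (C/(2 max(τ_p,τ_d) C₂))²)`. Then there is an optimal solution
`(x*,y*,s*)` of the original QP with
`{i : sᵢ ≥ C} ⊆ {i : s*ᵢ > 0} ⊆ {i : x*ᵢ = 0} ⊆ {i : xᵢ < C}`. -/
theorem active_set_sandwich {m n : ℕ}
    (H : Matrix (Fin n) (Fin n) ℝ) (A : Matrix (Fin m) (Fin n) ℝ)
    (b : Fin m → ℝ) (c : Fin n → ℝ) (hH : H.PosSemidef)
    (γ : ℝ) (hγ : γ ∈ Set.Ioo (0 : ℝ) 1)
    (τp τd : ℝ) (hτp : 0 < τp) (hτd : 0 < τd)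
    (C : ℝ) (hC : 0 < C)
    (lam : Fin n → ℝ) (hlam : 0 ≤ lam) (hlam0 : 0 < eucNorm lam)
    (hlamub : eucNorm lam < min 1 (C / (8 * max τp τd)))
    (x : Fin n → ℝ) (y : Fin m → ℝ) (s : Fin n → ℝ)
    (hmem : InSymNbhd H A b c γ lam x s y)
    (hmu : muLam lam x s < min 1 ((C / (2 * max τp τd * C2 n γ)) ^ 2))
    (hprox : ∃ (xs : Fin n → ℝ) (ys : Fin m → ℝ) (ss : Fin n → ℝ),
      KKT H A b c xs ys ss ∧
      eucNorm (x - xs) < τp * proxBound γ lam x s ∧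
      eucNorm (s - ss) < τd * proxBound γ lam x s) :
    ∃ (xs : Fin n → ℝ) (ys : Fin m → ℝ) (ss : Fin n → ℝ),
      KKT H A b c xs ys ss ∧
      {i : Fin n | C ≤ s i} ⊆ {i : Fin n | 0 < ss i} ∧
      {i : Fin n | 0 < ss i} ⊆ {i : Fin n | xs i = 0} ∧
      {i : Fin n | xs i = 0} ⊆ {i : Fin n | x i < C} :=
  active_set_sandwich_general H A b c γ τp τd hτp C hC lam hlamub x s hmu hprox
end
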